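/- arXiv:2210.06241 — 2 statements merged into one kernel-verified Lean document; each statement's English description precedes it below -/
import Mathlib

section
/- If there exists a binary self-orthogonal [n, k+1, 2m] code, then there exists an even-like binary [n - 2m, k, 2⌈m/2⌉] linear code (a code of length n - 2m, dimension k, minimum distance at least 2⌈m/2⌉, all of whose codewords have even weight). -/
/-!
Let `c` be a codeword of minimum weight `2m` and delete its support. Self-orthogonality makes every
codeword meet itself and `c` in an even number of positions, so what remains has even weight. For a
codeword `x ∉ {0, c}` the weights of `x` and `x + c` add up to `2m` plus twice the weight of the
residual of `x`, and both are at least `2m`; so that residual weight is at least `m`, hence at least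
`2⌈m/2⌉` by parity. The same count shows that only `0` and `c` have zero residual, so the dimension
drops by exactly one.
-/

/-- A binary linear code is self-orthogonal if all pairs of codewords have zero
inner product over `F_2`. -/
def IsSO {n : ℕ} (C : Submodule (ZMod 2) (Fin n → ZMod 2)) : Prop :=
  ∀ x ∈ C, ∀ y ∈ C, ∑ i, x i * y i = 0

/-- `C` has minimum distance exactly `d`. -/
def IsMinDist {n : ℕ} (C : Submodule (ZMod 2) (Fin n → ZMod 2)) (d : ℕ) : Prop :=
  (∃ x ∈ C, x ≠ 0 ∧ hammingNorm x = d) ∧ ∀ x ∈ C, x ≠ 0 → d ≤ hammingNorm x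

open Finset Module

theorem Submodule.finrank_map_add_one_of_ker_le_span {K V W : Type*} [DivisionRing K]
    [AddCommGroup V] [Module K V] [FiniteDimensional K V] [AddCommGroup W] [Module K W]
    (f : V →ₗ[K] W) {C : Submodule K V} {c : V} (hc : c ∈ C) (hc0 : c ≠ 0) (hfc : f c = 0)
    (hker : ∀ x ∈ C, f x = 0 → x ∈ K ∙ c) :
    finrank K (C.map f) + 1 = finrank K C := by
  have hker_eq : LinearMap.ker (f ∘ₗ C.subtype) = K ∙ (⟨c, hc⟩ : C) := by
    refine le_antisymm (fun x hx => ?_) ((Submodule.span_singleton_le_iff_mem _ _).2 hfc)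
    obtain ⟨a, ha⟩ := Submodule.mem_span_singleton.1 (hker x x.2 hx)
    exact Submodule.mem_span_singleton.2 ⟨a, Subtype.ext ha⟩
  have hc0' : (⟨c, hc⟩ : C) ≠ 0 := fun h => hc0 (congrArg Subtype.val h)
  rw [← finrank_span_singleton (K := K) hc0', ← hker_eq,
    ← LinearMap.finrank_range_add_finrank_ker (f ∘ₗ C.subtype),
    LinearMap.range_comp, Submodule.range_subtype]

section Weights

variable {ι κ : Type*} [Fintype ι] [Fintype κ]

theorem ZMod.sum_eq_hammingNorm (x : ι → ZMod 2) : ∑ i, x i = hammingNorm x := by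
  rw [hammingNorm, Finset.card_filter, Nat.cast_sum]
  exact Finset.sum_congr rfl fun i _ => by generalize x i = a; revert a; decide

theorem ZMod.two_dvd_hammingNorm_iff (x : ι → ZMod 2) :
    2 ∣ hammingNorm x ↔ ∑ i, x i = 0 := by
  rw [ZMod.sum_eq_hammingNorm, ZMod.natCast_eq_zero_iff]

theorem Fintype.sum_equiv_subtype {M : Type*} [AddCommMonoid M] {p : ι → Prop} [DecidablePred p]
    (e : κ ≃ {i // p i}) (f : ι → M) : ∑ j, f (e j) = ∑ i with p i, f i := by
  rw [Equiv.sum_comp e (fun i => f i)]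
  exact (Finset.sum_subtype _ (fun i => Finset.mem_filter_univ i) f).symm

/-- On each coordinate exactly one of `x i`, `x i + c i` is nonzero when `c i ≠ 0`, and both or
neither are when `c i = 0`. -/
theorem ZMod.hammingNorm_add_hammingNorm_add (x c : ι → ZMod 2) :
    hammingNorm x + hammingNorm (x + c) = 2 * #{i | c i = 0 ∧ x i ≠ 0} + hammingNorm c := by
  simp only [hammingNorm, Finset.card_filter, Finset.mul_sum, ← Finset.sum_add_distrib]
  have key : ∀ a b : ZMod 2, ((if a ≠ 0 then 1 else 0) + if a + b ≠ 0 then 1 else 0) =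
      (2 * if b = 0 ∧ a ≠ 0 then 1 else 0) + if b ≠ 0 then 1 else 0 := by decide
  exact Finset.sum_congr rfl fun i _ => key (x i) (c i)

theorem card_subtype_eq_zero_eq_sub_hammingNorm {β : Type*} [DecidableEq β] [Zero β]
    (x : ι → β) : Fintype.card {i // x i = 0} = Fintype.card ι - hammingNorm x := by
  rw [Fintype.card_subtype, hammingNorm, ← Finset.card_univ,
    ← Finset.card_filter_add_card_filter_not (s := univ) (fun i => x i = 0)]
  simp

theorem ZMod.sum_filter_eq_zero_of_orthogonal {x c : ι → ZMod 2}
    (hxx : ∑ i, x i * x i = 0) (hxc : ∑ i, x i * c i = 0) : ∑ i with c i = 0, x i = 0 := by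
  have key : ∀ a b : ZMod 2, (if b = 0 then a else 0) = a * a + a * b := by decide
  calc ∑ i with c i = 0, x i = ∑ i, (x i * x i + x i * c i) := by
        rw [Finset.sum_filter]; exact Finset.sum_congr rfl fun i _ => key (x i) (c i)
    _ = 0 := by rw [Finset.sum_add_distrib, hxx, hxc, add_zero]

end Weights

section Residual

variable {ι κ R : Type*} [Semiring R]

/-- The residual of a code with respect to a codeword `c`: delete the coordinates in the support of
`c`, the remaining ones being listed by `e`. -/
def residualMap (c : ι → R) (e : κ ≃ {i // c i = 0}) : (ι → R) →ₗ[R] κ → R :=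
  LinearMap.funLeft R R fun j => (e j : ι)

theorem residualMap_self (c : ι → R) (e : κ ≃ {i // c i = 0}) : residualMap c e c = 0 :=
  funext fun j => (e j).2

theorem sum_residualMap [Fintype ι] [Fintype κ] [DecidableEq R] (c : ι → R)
    (e : κ ≃ {i // c i = 0}) (x : ι → R) :
    ∑ j, residualMap c e x j = ∑ i with c i = 0, x i :=
  Fintype.sum_equiv_subtype e x

theorem hammingNorm_residualMap [Fintype ι] [Fintype κ] [DecidableEq R] (c : ι → R)
    (e : κ ≃ {i // c i = 0}) (x : ι → R) :
    hammingNorm (residualMap c e x) = #{i | c i = 0 ∧ x i ≠ 0} := by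
  rw [hammingNorm, Finset.card_filter, ← Finset.filter_filter, Finset.card_filter]
  exact Fintype.sum_equiv_subtype e fun i => if x i ≠ 0 then 1 else 0

end Residual

section MinimumWeight

variable {ι κ : Type*} [Fintype ι] [Fintype κ] {C : Submodule (ZMod 2) (ι → ZMod 2)}
  {c x : ι → ZMod 2} (e : κ ≃ {i // c i = 0})

theorem hammingNorm_le_two_mul_hammingNorm_residualMap (hc : c ∈ C)
    (hmin : ∀ y ∈ C, y ≠ 0 → hammingNorm c ≤ hammingNorm y) (hx : x ∈ C) (hx0 : x ≠ 0)
    (hxc : x ≠ c) : hammingNorm c ≤ 2 * hammingNorm (residualMap c e x) := by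
  have hxc0 : x + c ≠ 0 := fun h =>
    hxc (funext fun i => CharTwo.add_eq_zero.1 (congrFun h i))
  have h₁ := hmin x hx hx0
  have h₂ := hmin (x + c) (C.add_mem hx hc) hxc0
  have h₃ := ZMod.hammingNorm_add_hammingNorm_add x c
  rw [hammingNorm_residualMap]
  omega

theorem eq_zero_or_eq_of_residualMap_eq_zero (hc : c ∈ C) (hc0 : c ≠ 0)
    (hmin : ∀ y ∈ C, y ≠ 0 → hammingNorm c ≤ hammingNorm y) (hx : x ∈ C)
    (hres : residualMap c e x = 0) : x = 0 ∨ x = c := by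
  by_contra! h
  have := hammingNorm_le_two_mul_hammingNorm_residualMap e hc hmin hx h.1 h.2
  rw [hres, hammingNorm_zero, mul_zero, Nat.le_zero, hammingNorm_eq_zero] at this
  exact hc0 this

end MinimumWeight

/-- If there exists a binary self-orthogonal `[n, k+1, 2m]` code, then there exists an
even-like binary `[n - 2m, k]` code with minimum distance at least `2⌈m/2⌉`. -/
theorem so_shortening (n k m : ℕ)
    (h : ∃ C : Submodule (ZMod 2) (Fin n → ZMod 2),
      IsSO C ∧ Module.finrank (ZMod 2) C = k + 1 ∧ IsMinDist C (2 * m)) :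
    ∃ C : Submodule (ZMod 2) (Fin (n - 2 * m) → ZMod 2),
      Module.finrank (ZMod 2) C = k ∧ (∀ x ∈ C, ∑ i, x i = 0) ∧
        ∀ x ∈ C, x ≠ 0 → 2 * ((m + 1) / 2) ≤ hammingNorm x := by
  obtain ⟨C, hSO, hrank, ⟨c, hc, hc0, hcw⟩, hmin⟩ := h
  have hmin' : ∀ y ∈ C, y ≠ 0 → hammingNorm c ≤ hammingNorm y := hcw ▸ hmin
  have hcard : Fintype.card {i // c i = 0} = n - 2 * m := by
    rw [card_subtype_eq_zero_eq_sub_hammingNorm, hcw, Fintype.card_fin]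
  set e := (Fintype.equivFinOfCardEq hcard).symm
  have heven : ∀ y ∈ C.map (residualMap c e), ∑ i, y i = 0 := by
    rintro _ ⟨x, hx, rfl⟩
    rw [sum_residualMap]
    exact ZMod.sum_filter_eq_zero_of_orthogonal (hSO x hx x hx) (hSO x hx c hc)
  refine ⟨C.map (residualMap c e), ?_, heven, ?_⟩
  · have := Submodule.finrank_map_add_one_of_ker_le_span _ hc hc0 (residualMap_self c e)
      fun x hx hres => by
        rcases eq_zero_or_eq_of_residualMap_eq_zero e hc hc0 hmin' hx hres with rfl | rfl
        exacts [Submodule.zero_mem _, Submodule.mem_span_singleton_self _]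
    omega
  · rintro _ ⟨x, hx, rfl⟩ hy
    have hwt := hammingNorm_le_two_mul_hammingNorm_residualMap e hc hmin' hx
      (by rintro rfl; exact hy (map_zero _)) (by rintro rfl; exact hy (residualMap_self _ _))
    have hpar := (ZMod.two_dvd_hammingNorm_iff _).2 (heven _ ⟨x, hx, rfl⟩)
    omega
end

section
/- For every integer m ≥ 1, if there exists a binary self-orthogonal [31m + 6, 5] code with minimum distance ≥ 16m + 2, then there exists an even-like binary [15m + 4, 4] code with minimum distance ≥ 8m + 2, contradicting the Griesmer bound; hence no binary self-orthogonal [31m + 6, 5, 16m + 2] code exists. -/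
open Module

variable {ι : Type*} [Fintype ι]

theorem Fintype.sum_subtype_eq_sum_ite {M : Type*} [AddCommMonoid M] (p : ι → Prop)
    [DecidablePred p] (f : ι → M) :
    ∑ j : {i // p i}, f j = ∑ i, if p i then f i else 0 := by
  rw [← Finset.sum_filter]
  exact (Finset.sum_subtype _ (by simp) f).symm

theorem hammingNorm_eq_sum_ite {β : Type*} [Zero β] [DecidableEq β] (x : ι → β) :
    hammingNorm x = ∑ i, if x i ≠ 0 then 1 else 0 :=
  Finset.card_filter _ _

theorem natCast_hammingNorm_eq_sum (x : ι → ZMod 2) : (hammingNorm x : ZMod 2) = ∑ i, x i := by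
  rw [hammingNorm_eq_sum_ite, Nat.cast_sum]
  refine Finset.sum_congr rfl fun i _ => ?_
  have key : ∀ a : ZMod 2, ((if a ≠ 0 then 1 else 0 : ℕ) : ZMod 2) = a := by decide
  exact key (x i)

theorem hammingNorm_comp_equiv {κ β : Type*} [Fintype κ] [Zero β] [DecidableEq β]
    (y : ι → β) (e : κ ≃ ι) : hammingNorm (y ∘ e) = hammingNorm y := by
  simp only [hammingNorm_eq_sum_ite]
  exact e.sum_comp fun i => if y i ≠ 0 then 1 else 0

theorem card_subtype_eq_zero_add_hammingNorm (x : ι → ZMod 2) :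
    Fintype.card {i // x i = 0} + hammingNorm x = Fintype.card ι := by
  rw [Fintype.card_subtype, hammingNorm]
  exact Finset.card_filter_add_card_filter_not _

def residualCode (C : Submodule (ZMod 2) (ι → ZMod 2)) (x : ι → ZMod 2) :
    Submodule (ZMod 2) ({i // x i = 0} → ZMod 2) :=
  C.map (LinearMap.funLeft (ZMod 2) (ZMod 2) Subtype.val)

theorem two_mul_hammingNorm_restrict_add (x y : ι → ZMod 2) :
    2 * hammingNorm (fun j : {i // x i = 0} => y j) + hammingNorm x
      = hammingNorm y + hammingNorm (x + y) := by
  simp only [hammingNorm_eq_sum_ite, Fintype.sum_subtype_eq_sum_ite (fun i => x i = 0)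
    (fun i => if y i ≠ 0 then 1 else 0), Finset.mul_sum, ← Finset.sum_add_distrib, Pi.add_apply]
  refine Finset.sum_congr rfl fun i _ => ?_
  have key : ∀ a b : ZMod 2, ((2 * if a = 0 then if b ≠ 0 then 1 else 0 else 0)
      + if a ≠ 0 then 1 else 0 : ℕ) = (if b ≠ 0 then 1 else 0) + if a + b ≠ 0 then 1 else 0 := by
    decide
  exact key (x i) (y i)

section Residual

variable {C : Submodule (ZMod 2) (ι → ZMod 2)} {x : ι → ZMod 2} {d : ℕ}

theorem le_two_mul_hammingNorm_of_mem_residualCode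
    (hd : ∀ y ∈ C, y ≠ 0 → d ≤ hammingNorm y) (hx : x ∈ C) :
    ∀ z ∈ residualCode C x, z ≠ 0 → 2 * d ≤ 2 * hammingNorm z + hammingNorm x := by
  rintro _ ⟨y, hy, rfl⟩ hz
  change 2 * d ≤ 2 * hammingNorm (fun j : {i // x i = 0} => y j) + _
  have hy0 : y ≠ 0 := by rintro rfl; exact hz rfl
  have hxy0 : x + y ≠ 0 := by
    intro hxy
    refine hz (funext fun j => ?_)
    simp [LinearMap.funLeft_apply, eq_neg_of_add_eq_zero_right hxy, j.2]
  have := two_mul_hammingNorm_restrict_add x y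
  have := hd y hy hy0
  have := hd _ (C.add_mem hx hy) hxy0
  omega

theorem finrank_residualCode_add_one (hd : ∀ y ∈ C, y ≠ 0 → d ≤ hammingNorm y) (hx : x ∈ C)
    (hx0 : x ≠ 0) (hxd : hammingNorm x < 2 * d) :
    finrank (ZMod 2) (residualCode C x) + 1 = finrank (ZMod 2) C := by
  set f := (LinearMap.funLeft (ZMod 2) (ZMod 2) (Subtype.val : {i // x i = 0} → ι)).comp C.subtype
  have hker : LinearMap.ker f = (ZMod 2) ∙ (⟨x, hx⟩ : C) := by
    refine le_antisymm (fun y hy => ?_) ?_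
    · have hres := two_mul_hammingNorm_restrict_add x y
      rw [show (fun j : {i // x i = 0} => (y : ι → ZMod 2) j) = 0 from hy, hammingNorm_zero] at hres
      by_cases hy0 : (y : ι → ZMod 2) = 0
      · simp [(Subtype.ext hy0 : y = 0)]
      by_cases hxy : x + y = 0
      · rw [Submodule.mem_span_singleton]
        refine ⟨-1, Subtype.ext ?_⟩
        rw [neg_smul, one_smul, Submodule.coe_neg]
        exact neg_eq_of_add_eq_zero_right hxy
      have := hd y y.2 hy0
      have := hd _ (C.add_mem hx y.2) hxy
      omega
    · rw [Submodule.span_le, Set.singleton_subset_iff, SetLike.mem_coe, LinearMap.mem_ker]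
      funext j
      exact j.2
  have := LinearMap.finrank_range_add_finrank_ker f
  rwa [LinearMap.range_comp, Submodule.range_subtype, hker,
    finrank_span_singleton (by simpa [Subtype.ext_iff] using hx0)] at this

end Residual

/-- `(d + 2 ^ i - 1) / 2 ^ i` is `⌈d / 2 ^ i⌉`. -/
def griesmerSum (k d : ℕ) : ℕ :=
  ∑ i ∈ Finset.range k, (d + 2 ^ i - 1) / 2 ^ i

theorem griesmerSum_succ (k d : ℕ) :
    griesmerSum (k + 1) d = d + griesmerSum k ((d + 1) / 2) := by
  rw [griesmerSum, Finset.sum_range_succ', add_comm, griesmerSum]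
  congr 1
  · simp
  refine Finset.sum_congr rfl fun i _ => ?_
  have hpos : 0 < 2 ^ i := Nat.two_pow_pos i
  rw [pow_succ', ← Nat.div_div_eq_div_mul]
  congr 1
  omega

theorem griesmerSum_mono (k : ℕ) : Monotone (griesmerSum k) := fun _ _ h =>
  Finset.sum_le_sum fun _ _ => Nat.div_le_div_right (by omega)

theorem griesmerSum_le_card (C : Submodule (ZMod 2) (ι → ZMod 2))
    {d : ℕ} (hd : ∀ x ∈ C, x ≠ 0 → d ≤ hammingNorm x) :
    griesmerSum (finrank (ZMod 2) C) d ≤ Fintype.card ι := by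
  induction hk : finrank (ZMod 2) C generalizing ι C d with
  | zero => simp [griesmerSum]
  | succ k ih =>
    have hne : {x | x ∈ C ∧ x ≠ 0}.Nonempty :=
      Submodule.exists_mem_ne_zero_of_ne_bot (Submodule.finrank_eq_zero.not.mp (by omega))
    obtain ⟨x, ⟨hx, hx0⟩, hxmin⟩ := Set.exists_min_image _ hammingNorm (Set.toFinite _) hne
    have hmin : ∀ y ∈ C, y ≠ 0 → hammingNorm x ≤ hammingNorm y := fun y hy hy0 => hxmin y ⟨hy, hy0⟩
    have hw : 0 < hammingNorm x := hammingNorm_pos_iff.mpr hx0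
    have hrank := finrank_residualCode_add_one hmin hx hx0 (by omega)
    have hres : ∀ z ∈ residualCode C x, z ≠ 0 → (hammingNorm x + 1) / 2 ≤ hammingNorm z :=
      fun z hz hz0 => by
        have := le_two_mul_hammingNorm_of_mem_residualCode hmin hx z hz hz0
        omega
    calc griesmerSum (k + 1) d ≤ griesmerSum (k + 1) (hammingNorm x) :=
          griesmerSum_mono _ (hd x hx hx0)
      _ = hammingNorm x + griesmerSum k ((hammingNorm x + 1) / 2) := griesmerSum_succ _ _
      _ ≤ hammingNorm x + Fintype.card {i // x i = 0} := by
          grw [ih _ hres (by omega)]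
      _ = Fintype.card ι := by rw [add_comm, card_subtype_eq_zero_add_hammingNorm]

theorem exists_hammingNorm_eq_of_two_dvd {C : Submodule (ZMod 2) (ι → ZMod 2)} {d : ℕ}
    (heven : ∀ y ∈ C, 2 ∣ hammingNorm y) (hd : ∀ y ∈ C, y ≠ 0 → d ≤ hammingNorm y) (hd2 : 2 ∣ d)
    (hcard : Fintype.card ι < griesmerSum (finrank (ZMod 2) C) (d + 2)) :
    ∃ x ∈ C, x ≠ 0 ∧ hammingNorm x = d := by
  by_contra! hne
  have hd' : ∀ y ∈ C, y ≠ 0 → d + 2 ≤ hammingNorm y := fun y hy hy0 => by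
    have := hd y hy hy0
    have := hne y hy hy0
    have := heven y hy
    omega
  exact hcard.not_ge (griesmerSum_le_card C hd')

namespace IsSO

variable {n : ℕ} {C : Submodule (ZMod 2) (Fin n → ZMod 2)}

theorem sum_eq_zero (hC : IsSO C) {y : Fin n → ZMod 2} (hy : y ∈ C) : ∑ i, y i = 0 := by
  have key : ∀ a : ZMod 2, a * a = a := by decide
  simpa only [key] using hC y hy y hy

theorem two_dvd_hammingNorm (hC : IsSO C) {y : Fin n → ZMod 2} (hy : y ∈ C) :
    2 ∣ hammingNorm y :=
  (ZMod.natCast_eq_zero_iff _ 2).mp (by rw [natCast_hammingNorm_eq_sum, hC.sum_eq_zero hy])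

theorem sum_eq_zero_of_mem_residualCode (hC : IsSO C) {x : Fin n → ZMod 2} (hx : x ∈ C) :
    ∀ z ∈ residualCode C x, ∑ j, z j = 0 := by
  rintro _ ⟨y, hy, rfl⟩
  have key : ∀ a b : ZMod 2, (if a = 0 then b else 0) = b * b + a * b := by decide
  simp only [LinearMap.funLeft_apply, Fintype.sum_subtype_eq_sum_ite (fun i => x i = 0) y, key,
    Finset.sum_add_distrib, hC y hy y hy, hC x hx y hy, add_zero]

theorem exists_evenLike_shortened (hC : IsSO C) {n' k d : ℕ}
    (hk : finrank (ZMod 2) C = k + 1) (hd : ∀ y ∈ C, y ≠ 0 → 2 * d ≤ hammingNorm y)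
    {x : Fin n → ZMod 2} (hx : x ∈ C) (hxd : hammingNorm x = 2 * d) (hd0 : 0 < d)
    (hn : n' + 2 * d = n) :
    ∃ D : Submodule (ZMod 2) (Fin n' → ZMod 2), finrank (ZMod 2) D = k ∧
      (∀ z ∈ D, ∑ i, z i = 0) ∧ ∀ z ∈ D, z ≠ 0 → 2 * ((d + 1) / 2) ≤ hammingNorm z := by
  have hx0 : x ≠ 0 := hammingNorm_pos_iff.mp (by omega)
  have hcard : Fintype.card {i // x i = 0} = n' := by
    have := card_subtype_eq_zero_add_hammingNorm x
    rw [Fintype.card_fin] at this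
    omega
  let e := LinearEquiv.funCongrLeft (ZMod 2) (ZMod 2) (Fintype.equivFinOfCardEq hcard).symm
  refine ⟨(residualCode C x).map e.toLinearMap, ?_, ?_, ?_⟩
  · have := finrank_residualCode_add_one hd hx hx0 (by omega)
    rw [LinearEquiv.finrank_map_eq]
    omega
  · rintro _ ⟨z, hz, rfl⟩
    simpa [e, Equiv.sum_comp] using hC.sum_eq_zero_of_mem_residualCode hx z hz
  · rintro _ ⟨z, hz, rfl⟩ hz0
    have hz0 : z ≠ 0 := by rintro rfl; exact hz0 (map_zero _)
    have hwt := le_two_mul_hammingNorm_of_mem_residualCode hd hx z hz hz0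
    have heven : 2 ∣ hammingNorm z := (ZMod.natCast_eq_zero_iff _ 2).mp
      (by rw [natCast_hammingNorm_eq_sum, hC.sum_eq_zero_of_mem_residualCode hx z hz])
    have : hammingNorm (e z) = hammingNorm z := hammingNorm_comp_equiv z _
    simp only [LinearEquiv.coe_coe, this]
    omega

end IsSO

theorem exists_evenLike_of_isSO_31m6 (m : ℕ) {C : Submodule (ZMod 2) (Fin (31 * m + 6) → ZMod 2)}
    (hC : IsSO C) (hk : finrank (ZMod 2) C = 5) (hd : ∀ x ∈ C, x ≠ 0 → 16 * m + 2 ≤ hammingNorm x) :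
    ∃ D : Submodule (ZMod 2) (Fin (15 * m + 4) → ZMod 2), finrank (ZMod 2) D = 4 ∧
      (∀ z ∈ D, ∑ i, z i = 0) ∧ ∀ z ∈ D, z ≠ 0 → 8 * m + 2 ≤ hammingNorm z := by
  obtain ⟨x, hx, -, hxd⟩ := exists_hammingNorm_eq_of_two_dvd (fun _ => hC.two_dvd_hammingNorm)
    hd ⟨8 * m + 1, by ring⟩ (by norm_num [hk, griesmerSum, Finset.sum_range_succ]; omega)
  obtain ⟨D, hDk, hDsum, hDd⟩ := hC.exists_evenLike_shortened (n' := 15 * m + 4) (k := 4)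
    (d := 8 * m + 1) hk (fun y hy hy0 => by have := hd y hy hy0; omega) hx (by omega) (by omega)
    (by omega)
  exact ⟨D, hDk, hDsum, fun z hz hz0 => by have := hDd z hz hz0; omega⟩

theorem no_so_31m6_general (m : ℕ) :
    ((∃ C : Submodule (ZMod 2) (Fin (31 * m + 6) → ZMod 2),
        IsSO C ∧ Module.finrank (ZMod 2) C = 5 ∧
          ∀ x ∈ C, x ≠ 0 → 16 * m + 2 ≤ hammingNorm x) →
      ∃ C : Submodule (ZMod 2) (Fin (15 * m + 4) → ZMod 2),
        Module.finrank (ZMod 2) C = 4 ∧ (∀ x ∈ C, ∑ i, x i = 0) ∧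
          ∀ x ∈ C, x ≠ 0 → 8 * m + 2 ≤ hammingNorm x) ∧
    ¬ ∃ C : Submodule (ZMod 2) (Fin (31 * m + 6) → ZMod 2),
        IsSO C ∧ Module.finrank (ZMod 2) C = 5 ∧
          ∀ x ∈ C, x ≠ 0 → 16 * m + 2 ≤ hammingNorm x := by
  refine ⟨fun ⟨_, hC, hk, hd⟩ => exists_evenLike_of_isSO_31m6 m hC hk hd, ?_⟩
  rintro ⟨C, hC, hk, hd⟩
  obtain ⟨D, hDk, -, hDd⟩ := exists_evenLike_of_isSO_31m6 m hC hk hd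
  have griesmer := griesmerSum_le_card D hDd
  norm_num [hDk, griesmerSum, Finset.sum_range_succ] at griesmer
  omega

/-- For every `m ≥ 1`: a binary self-orthogonal `[31m+6, 5]` code with minimum distance
`≥ 16m+2` would yield an even-like binary `[15m+4, 4]` code with minimum distance
`≥ 8m+2` (contradicting the Griesmer bound); hence no such self-orthogonal code exists. -/
theorem no_so_31m6 (m : ℕ) (hm : 1 ≤ m) :
    ((∃ C : Submodule (ZMod 2) (Fin (31 * m + 6) → ZMod 2),
        IsSO C ∧ Module.finrank (ZMod 2) C = 5 ∧
          ∀ x ∈ C, x ≠ 0 → 16 * m + 2 ≤ hammingNorm x) →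
      ∃ C : Submodule (ZMod 2) (Fin (15 * m + 4) → ZMod 2),
        Module.finrank (ZMod 2) C = 4 ∧ (∀ x ∈ C, ∑ i, x i = 0) ∧
          ∀ x ∈ C, x ≠ 0 → 8 * m + 2 ≤ hammingNorm x) ∧
    ¬ ∃ C : Submodule (ZMod 2) (Fin (31 * m + 6) → ZMod 2),
        IsSO C ∧ Module.finrank (ZMod 2) C = 5 ∧
          ∀ x ∈ C, x ≠ 0 → 16 * m + 2 ≤ hammingNorm x :=
  no_so_31m6_general m
end
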